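/- arXiv:2010.10199 — 3 statements merged into one kernel-verified Lean document; each statement's English description precedes it below -/
import Mathlib

section
/- Let I be a finite index set, ω : I → [0,∞) a weight function, y ∈ ℂ^I, and ξ > 0. Define x₂*(ξ) ∈ ℂ^I by (x₂*(ξ))_k = y_k / (1 + 2ξω(k)) and set λ := ‖( y_k / (1/(2ξ) + ω(k)) )_{k∈I}‖_W. Then x₂*(ξ) is a minimizer of the function x ↦ (1/2)‖x − y‖₂² + λ‖x‖_W over ℂ^I. -/
/-!
Write `x* = y / (1 + 2ξω)`. Then `y - x* = 2ξ ω x*` and `λ = 2ξ ‖x*‖_W`, so by the weighted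
Cauchy–Schwarz inequality `y - x*` is a subgradient of `λ ‖·‖_W` at `x*`. This is the first-order
optimality condition for `½‖· - y‖₂² + λ‖·‖_W`, and it suffices because
`‖x - y‖² = ‖x - x*‖² + 2 re⟪x - x*, x* - y⟫ + ‖x* - y‖²`.
-/

open Finset RCLike
open scoped InnerProductSpace

section Prox

variable {𝕜 E : Type*} [RCLike 𝕜] [NormedAddCommGroup E] [InnerProductSpace 𝕜 E]

theorem half_norm_sub_sq_add_le_of_subgradient {p : E → ℝ} {y z : E}
    (hsub : ∀ x, p z + re ⟪y - z, x - z⟫_𝕜 ≤ p x) (x : E) :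
    1 / 2 * ‖z - y‖ ^ 2 + p z ≤ 1 / 2 * ‖x - y‖ ^ 2 + p x := by
  have hsplit : ‖x - y‖ ^ 2 = ‖x - z‖ ^ 2 + 2 * re ⟪x - z, z - y⟫_𝕜 + ‖z - y‖ ^ 2 := by
    rw [← norm_add_sq, sub_add_sub_cancel]
  have hflip : re ⟪x - z, z - y⟫_𝕜 = -re ⟪y - z, x - z⟫_𝕜 := by
    rw [inner_re_symm, ← neg_sub y z, inner_neg_left, map_neg]
  nlinarith [hsub x, sq_nonneg ‖x - z‖]

end Prox

section WeightedNorm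

variable {ι 𝕜 : Type*} [Fintype ι] [RCLike 𝕜] {ω : ι → ℝ}

noncomputable def weightedNorm (ω : ι → ℝ) (x : EuclideanSpace 𝕜 ι) : ℝ :=
  √(∑ k, ω k * ‖x k‖ ^ 2)

theorem weightedNorm_smul (r : 𝕜) (x : EuclideanSpace 𝕜 ι) :
    weightedNorm ω (r • x) = ‖r‖ * weightedNorm ω x := by
  have hsum : ∑ k, ω k * ‖(r • x) k‖ ^ 2 = ‖r‖ ^ 2 * ∑ k, ω k * ‖x k‖ ^ 2 := by
    rw [mul_sum]
    refine sum_congr rfl fun k _ => ?_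
    rw [PiLp.smul_apply, norm_smul]
    ring
  rw [weightedNorm, weightedNorm, hsum, Real.sqrt_mul (by positivity), Real.sqrt_sq (norm_nonneg r)]

theorem sum_weight_mul_re_inner_le (hω : ∀ k, 0 ≤ ω k) (z x : EuclideanSpace 𝕜 ι) :
    ∑ k, ω k * re ⟪z k, x k⟫_𝕜 ≤ weightedNorm ω z * weightedNorm ω x := by
  calc ∑ k, ω k * re ⟪z k, x k⟫_𝕜
      ≤ ∑ k, (√(ω k) * ‖z k‖) * (√(ω k) * ‖x k‖) := by
        refine sum_le_sum fun k _ => ?_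
        rw [mul_mul_mul_comm, Real.mul_self_sqrt (hω k)]
        exact mul_le_mul_of_nonneg_left (re_inner_le_norm _ _) (hω k)
    _ ≤ √(∑ k, (√(ω k) * ‖z k‖) ^ 2) * √(∑ k, (√(ω k) * ‖x k‖) ^ 2) :=
        Real.sum_mul_le_sqrt_mul_sqrt _ _ _
    _ = weightedNorm ω z * weightedNorm ω x := by
        simp only [mul_pow, Real.sq_sqrt (hω _), weightedNorm]

theorem sum_weight_mul_re_inner_self (hω : ∀ k, 0 ≤ ω k) (z : EuclideanSpace 𝕜 ι) :
    ∑ k, ω k * re ⟪z k, z k⟫_𝕜 = weightedNorm ω z ^ 2 := by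
  rw [weightedNorm, Real.sq_sqrt (sum_nonneg fun k _ => mul_nonneg (hω k) (sq_nonneg _))]
  simp only [inner_self_eq_norm_sq]

theorem weightedNorm_subgradient (hω : ∀ k, 0 ≤ ω k) (z x : EuclideanSpace 𝕜 ι) :
    weightedNorm ω z ^ 2 + re ⟪WithLp.toLp 2 (fun k => ω k • z k), x - z⟫_𝕜
      ≤ weightedNorm ω z * weightedNorm ω x := by
  have hinner : re ⟪WithLp.toLp 2 (fun k => ω k • z k), x - z⟫_𝕜
      = ∑ k, ω k * re ⟪z k, x k⟫_𝕜 - ∑ k, ω k * re ⟪z k, z k⟫_𝕜 := by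
    simp only [PiLp.inner_apply, PiLp.sub_apply, map_sum, ← sum_sub_distrib]
    refine sum_congr rfl fun k _ => ?_
    rw [real_smul_eq_coe_smul (K := 𝕜), inner_smul_real_left, inner_sub_right, smul_sub, map_sub,
      smul_re, smul_re]
  rw [hinner, sum_weight_mul_re_inner_self hω]
  linarith [sum_weight_mul_re_inner_le hω z x]

theorem half_norm_sub_sq_add_mul_weightedNorm_le (hω : ∀ k, 0 ≤ ω k) {c : ℝ} (hc : 0 ≤ c)
    {y z : EuclideanSpace 𝕜 ι} (hres : y - z = c • WithLp.toLp 2 (fun k => ω k • z k))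
    (x : EuclideanSpace 𝕜 ι) :
    1 / 2 * ‖z - y‖ ^ 2 + c * weightedNorm ω z * weightedNorm ω z
      ≤ 1 / 2 * ‖x - y‖ ^ 2 + c * weightedNorm ω z * weightedNorm ω x := by
  refine half_norm_sub_sq_add_le_of_subgradient (𝕜 := 𝕜)
    (p := fun v => c * weightedNorm ω z * weightedNorm ω v) (fun v => ?_) x
  have hsub := mul_le_mul_of_nonneg_left (weightedNorm_subgradient hω z v) hc
  rw [sq] at hsub
  rw [hres, real_smul_eq_coe_smul (K := 𝕜), inner_smul_real_left, smul_re]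
  linarith

end WeightedNorm

section SoftThreshold

variable {c w : ℝ}

theorem sub_div_one_add_mul (h : 1 + c * w ≠ 0) (a : ℂ) :
    a - a / ((1 + c * w : ℝ) : ℂ) = c • w • (a / ((1 + c * w : ℝ) : ℂ)) := by
  have hden : ((1 + c * w : ℝ) : ℂ) ≠ 0 := by exact_mod_cast h
  simp only [Complex.real_smul]
  field_simp
  push_cast
  ring

theorem div_one_div_add (hc : c ≠ 0) (a : ℂ) :
    a / ((1 / c + w : ℝ) : ℂ) = (c : ℂ) * (a / ((1 + c * w : ℝ) : ℂ)) := by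
  have hsum : (1 / c + w : ℝ) = (1 + c * w) / c := by field_simp
  rw [hsum, Complex.ofReal_div, div_div_eq_mul_div, mul_comm, mul_div_assoc]

end SoftThreshold

/-- For a finite index set with nonnegative weights `ω`, data `y` and `ξ > 0`,
the vector `x₂*(ξ)` with entries `y_k / (1 + 2ξω(k))` minimizes the functional
`x ↦ (1/2)‖x-y‖₂² + λ‖x‖_W` for the specific regularization parameter
`λ = ‖( y_k / (1/(2ξ) + ω(k)) )_k‖_W`. -/
theorem weighted_soft_threshold_minimizer {ι : Type*} [Fintype ι]
    (ω : ι → ℝ) (hω : ∀ k, 0 ≤ ω k) (y : ι → ℂ) (ξ : ℝ) (hξ : 0 < ξ) :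
    ∀ x : ι → ℂ,
      (1 / 2) * ∑ k, ‖(fun k => y k / ((1 + 2 * ξ * ω k : ℝ) : ℂ)) k - y k‖ ^ 2
          + Real.sqrt (∑ k, ω k * ‖y k / ((1 / (2 * ξ) + ω k : ℝ) : ℂ)‖ ^ 2)
            * Real.sqrt (∑ k, ω k *
                ‖(fun k => y k / ((1 + 2 * ξ * ω k : ℝ) : ℂ)) k‖ ^ 2)
        ≤ (1 / 2) * ∑ k, ‖x k - y k‖ ^ 2
          + Real.sqrt (∑ k, ω k * ‖y k / ((1 / (2 * ξ) + ω k : ℝ) : ℂ)‖ ^ 2)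
            * Real.sqrt (∑ k, ω k * ‖x k‖ ^ 2) := by
  intro x
  set z : EuclideanSpace ℂ ι := WithLp.toLp 2 (fun k => y k / ((1 + 2 * ξ * ω k : ℝ) : ℂ))
  have h2ξ : 0 < 2 * ξ := by positivity
  have hres : WithLp.toLp 2 y - z = (2 * ξ) • WithLp.toLp 2 (fun k => ω k • z k) := by
    ext k
    have hden : 0 < 1 + 2 * ξ * ω k := by have := hω k; positivity
    exact sub_div_one_add_mul hden.ne' (y k)
  have hlambda : Real.sqrt (∑ k, ω k * ‖y k / ((1 / (2 * ξ) + ω k : ℝ) : ℂ)‖ ^ 2)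
      = 2 * ξ * weightedNorm ω z := by
    have hscale := weightedNorm_smul (ω := ω) ((2 * ξ : ℝ) : ℂ) z
    rw [Complex.norm_real, Real.norm_of_nonneg h2ξ.le] at hscale
    rw [← hscale]
    simp only [weightedNorm, PiLp.smul_apply, smul_eq_mul, z, div_one_div_add h2ξ.ne']
  have key := half_norm_sub_sq_add_mul_weightedNorm_le hω h2ξ.le hres (WithLp.toLp 2 x)
  simp only [EuclideanSpace.norm_sq_eq] at key
  rw [hlambda]
  exact key
end

section
/- Let I be a finite index set, ω : I → (0,∞) a strictly positive weight function, and y ∈ ℂ^I. If λ ≥ ‖( y_k / ω(k) )_{k∈I}‖_W, then the zero vector 0 ∈ ℂ^I is a minimizer of the function x ↦ (1/2)‖x − y‖₂² + λ‖x‖_W over ℂ^I. -/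
/-! Expanding the square, `½‖x - y‖₂² - ½‖y‖₂² ≥ -∑ₖ |xₖ| |yₖ|`, and the weighted Cauchy–Schwarz
inequality bounds `∑ₖ |xₖ| |yₖ| = ∑ₖ ω(k) |xₖ| (|yₖ| / ω(k))` by `‖x‖_W ‖(yₖ / ω(k))ₖ‖_W ≤ λ ‖x‖_W`. -/

open Finset

lemma norm_sq_le_norm_sub_sq_add {E : Type*} [SeminormedAddCommGroup E] (a b : E) :
    ‖b‖ ^ 2 ≤ ‖a - b‖ ^ 2 + 2 * (‖a‖ * ‖b‖) := by
  have htri : ‖b‖ ≤ ‖a - b‖ + ‖a‖ := by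
    simpa [norm_sub_rev] using norm_sub_le_norm_sub_add_norm_sub b a 0
  nlinarith [norm_nonneg b, sq_nonneg (‖a - b‖ - ‖b‖)]

lemma Real.sum_mul_le_sqrt_sum_weight_mul_sq_mul_sqrt {ι : Type*} (s : Finset ι)
    (ω f g : ι → ℝ) (hω : ∀ k ∈ s, 0 < ω k) :
    ∑ k ∈ s, f k * g k ≤
      √(∑ k ∈ s, ω k * f k ^ 2) * √(∑ k ∈ s, ω k * (g k / ω k) ^ 2) := by
  have hsplit : ∀ k ∈ s, f k * g k = (√(ω k) * f k) * (√(ω k) * (g k / ω k)) := by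
    intro k hk
    rw [mul_mul_mul_comm, Real.mul_self_sqrt (hω k hk).le]
    field_simp [(hω k hk).ne']
  have hsq : ∀ h : ι → ℝ, ∀ k ∈ s, (√(ω k) * h k) ^ 2 = ω k * h k ^ 2 := by
    intro h k hk
    rw [mul_pow, Real.sq_sqrt (hω k hk).le]
  rw [sum_congr rfl hsplit, ← sum_congr rfl (hsq f), ← sum_congr rfl (hsq fun k ↦ g k / ω k)]
  exact Real.sum_mul_le_sqrt_mul_sqrt s _ _

/-- For a finite index set with strictly positive weights `ω` and data `y`, if
`λ ≥ ‖( y_k / ω(k) )_k‖_W`, then the zero vector minimizes the functional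
`x ↦ (1/2)‖x-y‖₂² + λ‖x‖_W`. -/
theorem weighted_soft_threshold_zero_minimizer {ι : Type*} [Fintype ι]
    (ω : ι → ℝ) (hω : ∀ k, 0 < ω k) (y : ι → ℂ) (lam : ℝ)
    (hlam : Real.sqrt (∑ k, ω k * ‖y k / ((ω k : ℝ) : ℂ)‖ ^ 2) ≤ lam) :
    ∀ x : ι → ℂ,
      (1 / 2) * ∑ k, ‖(0 : ι → ℂ) k - y k‖ ^ 2
          + lam * Real.sqrt (∑ k, ω k * ‖(0 : ι → ℂ) k‖ ^ 2)
        ≤ (1 / 2) * ∑ k, ‖x k - y k‖ ^ 2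
          + lam * Real.sqrt (∑ k, ω k * ‖x k‖ ^ 2) := by
  intro x
  simp only [Pi.zero_apply, zero_sub, norm_neg, norm_zero]
  have hnorm_div : ∀ k, ‖y k / ((ω k : ℝ) : ℂ)‖ = ‖y k‖ / ω k := fun k ↦ by
    rw [norm_div, Complex.norm_real, Real.norm_of_nonneg (hω k).le]
  simp only [hnorm_div] at hlam
  have hexpand : ∑ k, ‖y k‖ ^ 2 ≤ ∑ k, ‖x k - y k‖ ^ 2 + 2 * ∑ k, ‖x k‖ * ‖y k‖ := by
    rw [mul_sum, ← sum_add_distrib]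
    exact sum_le_sum fun k _ ↦ norm_sq_le_norm_sub_sq_add (x k) (y k)
  have hcs := Real.sum_mul_le_sqrt_sum_weight_mul_sq_mul_sqrt univ ω (‖x ·‖) (‖y ·‖)
    fun k _ ↦ hω k
  have hlam_bound := mul_le_mul_of_nonneg_left hlam (Real.sqrt_nonneg (∑ k, ω k * ‖x k‖ ^ 2))
  simp only [ne_eq, OfNat.ofNat_ne_zero, not_false_eq_true, zero_pow, mul_zero, sum_const_zero,
    Real.sqrt_zero, add_zero]
  linarith
end

section
/- Let d ∈ ℕ, let v ⊆ {1,…,d}, and for every i ∈ v let g_i : [0,1] → ℂ be integrable with mean c_i := ∫_0^1 g_i(t) dt. Define f : [0,1]^d → ℂ by f(x) = ∏_{i∈v} g_i(x_i), and define the ANOVA terms recursively by f_u := P_u f − Σ_{w⊊u} f_w. Then f_u(x) = ( ∏_{i∈u} (g_i(x_i) − c_i) ) · ( ∏_{i∈v∖u} c_i ) whenever u ⊆ v, and f_u = 0 (identically) whenever u ⊄ v. -/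
open MeasureTheory

/-- The unit cube `[0,1]^d`. -/
def unitCube (d : ℕ) : Set (Fin d → ℝ) := Set.univ.pi fun _ => Set.Icc 0 1

/-- Lebesgue measure restricted to the unit cube `[0,1]^d` (a probability measure). -/
noncomputable def cubeMeasure (d : ℕ) : Measure (Fin d → ℝ) :=
  volume.restrict (unitCube d)

/-- The integral projection `P_u f`: integrate out the variables indexed by the
complement `u^c = {1,…,d} ∖ u`, keeping the variables `x_j`, `j ∈ u`, fixed. -/
noncomputable def integralProjection {d : ℕ} (u : Finset (Fin d))
    (f : (Fin d → ℝ) → ℂ) (x : Fin d → ℝ) : ℂ :=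
  ∫ y, f (fun j => if j ∈ u then x j else y j) ∂(cubeMeasure d)

/-- The ANOVA terms, defined recursively by `f_u = P_u f - Σ_{w ⊊ u} f_w`. -/
noncomputable def anovaTerm {d : ℕ} (f : (Fin d → ℝ) → ℂ) :
    Finset (Fin d) → (Fin d → ℝ) → ℂ
  | u => fun x =>
      integralProjection u f x
        - ∑ w ∈ (u.powerset.erase u).attach, anovaTerm f w.1 x
  termination_by u => u.card
  decreasing_by
    have hw := w.2
    rw [Finset.mem_erase, Finset.mem_powerset] at hw
    exact Finset.card_lt_card (ssubset_of_subset_of_ne hw.2 hw.1)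

/-!
The ANOVA terms are the unique family with `P_u f = ∑_{w ⊆ u} f_w` for every `u`, so it suffices
to check this identity for the claimed terms. By Fubini, `P_u f (x) = ∏_{i ∈ u ∩ v} g_i(x_i) ·
∏_{i ∈ v ∖ u} c_i`, and expanding `∏_{i ∈ u ∩ v} ((g_i(x_i) - c_i) + c_i)` over the subsets of
`u ∩ v` produces exactly the sum of the claimed terms `f_w` over `w ⊆ u`, as those with `w ⊄ v`
vanish.
-/

open Finset

theorem eq_of_forall_sum_powerset_eq {α M : Type*} [DecidableEq α] [AddCommGroup M]
    {F H : Finset α → M} (h : ∀ u : Finset α, ∑ w ∈ u.powerset, F w = ∑ w ∈ u.powerset, H w)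
    (u : Finset α) : F u = H u := by
  induction u using Finset.strongInduction with
  | H u ih =>
    have hproper : ∑ w ∈ u.powerset.erase u, F w = ∑ w ∈ u.powerset.erase u, H w :=
      sum_congr rfl fun w hw => ih w <| Finset.ssubset_iff_subset_ne.2
        ⟨mem_powerset.1 (mem_of_mem_erase hw), ne_of_mem_erase hw⟩
    have hu := h u
    rwa [← add_sum_erase _ _ (mem_powerset_self u), ← add_sum_erase _ _ (mem_powerset_self u),
      hproper, add_left_inj] at hu

theorem sum_powerset_prod_mul_prod_sdiff {ι R : Type*} [DecidableEq ι] [CommSemiring R]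
    (a b : ι → R) {s v : Finset ι} (hsv : s ⊆ v) :
    ∑ w ∈ s.powerset, (∏ i ∈ w, a i) * ∏ i ∈ v \ w, b i
      = (∏ i ∈ s, (a i + b i)) * ∏ i ∈ v \ s, b i := by
  rw [prod_add, sum_mul]
  refine sum_congr rfl fun w hw => ?_
  rw [← sdiff_union_sdiff_cancel hsv (mem_powerset.1 hw),
    prod_union (sdiff_disjoint.mono_right sdiff_subset)]
  ring

theorem cubeMeasure_eq_pi (d : ℕ) :
    cubeMeasure d = Measure.pi fun _ : Fin d => volume.restrict (Set.Icc (0 : ℝ) 1) := by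
  refine (Measure.pi_eq fun s hs => ?_).symm
  rw [cubeMeasure, unitCube, Measure.restrict_apply (MeasurableSet.univ_pi hs),
    ← Set.pi_inter_distrib, volume_pi_pi]
  exact prod_congr rfl fun i _ => (Measure.restrict_apply (hs i)).symm

theorem integral_cubeMeasure_prod {𝕜 : Type*} [RCLike 𝕜] {d : ℕ} (F : Fin d → ℝ → 𝕜) :
    ∫ y, ∏ i, F i (y i) ∂cubeMeasure d = ∏ i, ∫ t in Set.Icc (0 : ℝ) 1, F i t := by
  rw [cubeMeasure_eq_pi, integral_fintype_prod_eq_prod]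

theorem integralProjection_prod {d : ℕ} (v u : Finset (Fin d)) (g : Fin d → ℝ → ℂ)
    (x : Fin d → ℝ) :
    integralProjection u (fun z => ∏ i ∈ v, g i (z i)) x
      = (∏ i ∈ u ∩ v, g i (x i)) * ∏ i ∈ v \ u, ∫ t in Set.Icc (0 : ℝ) 1, g i t := by
  have hfactor (i : Fin d) :
      (∫ t in Set.Icc (0 : ℝ) 1, if i ∈ v then g i (if i ∈ u then x i else t) else 1)
        = if i ∈ v then (if i ∈ u then g i (x i) else ∫ t in Set.Icc (0 : ℝ) 1, g i t)
          else 1 := by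
    by_cases hv : i ∈ v <;> by_cases hu : i ∈ u <;> simp [hv, hu]
  simp_rw [integralProjection, ← prod_ite_mem_eq v]
  rw [integral_cubeMeasure_prod (fun i t => if i ∈ v then g i (if i ∈ u then x i else t) else 1)]
  simp_rw [hfactor]
  rw [prod_ite_mem_eq, prod_ite, filter_mem_eq_inter, filter_notMem_eq_sdiff, inter_comm]

theorem sum_powerset_anovaTerm {d : ℕ} (f : (Fin d → ℝ) → ℂ) (u : Finset (Fin d))
    (x : Fin d → ℝ) :
    ∑ w ∈ u.powerset, anovaTerm f w x = integralProjection u f x := by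
  rw [← add_sum_erase _ _ (mem_powerset_self u), anovaTerm]
  beta_reduce
  rw [sum_attach (u.powerset.erase u) fun w => anovaTerm f w x, sub_add_cancel]

noncomputable def productAnovaTerm {d : ℕ} (v : Finset (Fin d)) (g : Fin d → ℝ → ℂ)
    (u : Finset (Fin d)) (x : Fin d → ℝ) : ℂ :=
  if u ⊆ v then
    (∏ i ∈ u, (g i (x i) - ∫ t in Set.Icc (0 : ℝ) 1, g i t))
      * ∏ i ∈ v \ u, ∫ t in Set.Icc (0 : ℝ) 1, g i t
  else 0

theorem sum_powerset_productAnovaTerm {d : ℕ} (v : Finset (Fin d)) (g : Fin d → ℝ → ℂ)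
    (u : Finset (Fin d)) (x : Fin d → ℝ) :
    ∑ w ∈ u.powerset, productAnovaTerm v g w x
      = integralProjection u (fun z => ∏ i ∈ v, g i (z i)) x := by
  have hsubsets : u.powerset.filter (· ⊆ v) = (u ∩ v).powerset := by
    ext w
    simp only [mem_filter, mem_powerset, subset_inter_iff]
  simp_rw [productAnovaTerm, ← sum_filter, hsubsets, integralProjection_prod]
  rw [sum_powerset_prod_mul_prod_sdiff _ _ inter_subset_right, sdiff_inter_self_right]
  simp_rw [sub_add_cancel]

theorem anovaTerm_product_general (d : ℕ) (v : Finset (Fin d)) (g : Fin d → ℝ → ℂ)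
    (u : Finset (Fin d)) (x : Fin d → ℝ) :
    (u ⊆ v →
      anovaTerm (fun z => ∏ i ∈ v, g i (z i)) u x
        = (∏ i ∈ u, (g i (x i) - ∫ t in Set.Icc (0:ℝ) 1, g i t))
            * ∏ i ∈ v \ u, ∫ t in Set.Icc (0:ℝ) 1, g i t)
    ∧ (¬ u ⊆ v → anovaTerm (fun z => ∏ i ∈ v, g i (z i)) u x = 0) := by
  have hanova : anovaTerm (fun z => ∏ i ∈ v, g i (z i)) u x = productAnovaTerm v g u x :=
    eq_of_forall_sum_powerset_eq (fun w => (sum_powerset_anovaTerm _ w x).trans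
      (sum_powerset_productAnovaTerm v g w x).symm) u
  rw [hanova, productAnovaTerm]
  exact ⟨fun huv => if_pos huv, fun huv => if_neg huv⟩

/-- For a product function `f(x) = ∏_{i∈v} g_i(x_i)` with means
`c_i = ∫₀¹ g_i(t) dt`, the ANOVA terms are
`f_u(x) = (∏_{i∈u} (g_i(x_i) - c_i)) · (∏_{i∈v∖u} c_i)` for `u ⊆ v`, and
`f_u ≡ 0` for `u ⊄ v`. -/
theorem anovaTerm_product (d : ℕ) (v : Finset (Fin d)) (g : Fin d → ℝ → ℂ)
    (hg : ∀ i ∈ v, IntegrableOn (g i) (Set.Icc 0 1) volume)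
    (u : Finset (Fin d)) (x : Fin d → ℝ) :
    (u ⊆ v →
      anovaTerm (fun z => ∏ i ∈ v, g i (z i)) u x
        = (∏ i ∈ u, (g i (x i) - ∫ t in Set.Icc (0:ℝ) 1, g i t))
            * ∏ i ∈ v \ u, ∫ t in Set.Icc (0:ℝ) 1, g i t)
    ∧ (¬ u ⊆ v → anovaTerm (fun z => ∏ i ∈ v, g i (z i)) u x = 0) :=
  anovaTerm_product_general d v g u x
end
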